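/- For the Farey map with invariant measure dμ = (1/x)dλ and A_1 = (1/2,1], the wandering rate satisfies W_n := μ(⋃_{k=0}^n T^{-k}A_1) = log(n+2), and hence W_n ∼ log n as n → ∞. -/

import Mathlib

open MeasureTheory Filter

/-- The Farey map. -/
noncomputable def fareyMap (x : ℝ) : ℝ := if x ≤ 1 / 2 then x / (1 - x) else 1 / x - 1

/-- The infinite invariant measure `dμ = (1/x) dλ` on `[0,1]`. -/
noncomputable def fareyMeasure : Measure ℝ :=
  (volume.restrict (Set.Icc (0 : ℝ) 1)).withDensity fun x => ENNReal.ofReal (1 / x)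

/-! On `(0, 1/2]` the Farey map is `x⁻¹ ↦ x⁻¹ - 1` in the coordinate `x⁻¹`. Hence a point
`x ∈ (0, 1]` with `k + 1 ≤ x⁻¹ < k + 2` first enters `A₁ = (1/2, 1]` at time `k`, while the
points of `[0, 1/(n+2)]` stay in `[0, 1/2]` up to time `n`. So the union of the first `n + 1`
preimages of `A₁` is `(1/(n+2), 1]` on `[0, 1]`, whose `μ`-measure is `∫_{1/(n+2)}^1 dx/x`. -/

lemma measurable_fareyMap : Measurable fareyMap :=
  Measurable.ite (measurableSet_le measurable_id measurable_const)
    (measurable_id.div (measurable_const.sub measurable_id))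
    ((measurable_const.div measurable_id).sub measurable_const)

lemma fareyMap_zero : fareyMap 0 = 0 := by
  simp [fareyMap]

lemma inv_fareyMap_of_le_inv {x : ℝ} (hx : 0 < x) (h2 : 2 ≤ x⁻¹) :
    (fareyMap x)⁻¹ = x⁻¹ - 1 := by
  have hx_half : x ≤ 1 / 2 := by rw [one_div, le_inv_comm₀ hx two_pos]; exact h2
  have hx_one : 1 - x ≠ 0 := by linarith
  rw [fareyMap, if_pos hx_half]
  field_simp

lemma inv_iterate_fareyMap (k : ℕ) {x : ℝ} (hx : 0 < x) (hk : (k : ℝ) + 1 ≤ x⁻¹) :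
    (fareyMap^[k] x)⁻¹ = x⁻¹ - k := by
  induction k generalizing x with
  | zero => simp
  | succ k ih =>
    push_cast at hk
    have hTx : (fareyMap x)⁻¹ = x⁻¹ - 1 := inv_fareyMap_of_le_inv hx (by linarith)
    have hTx_pos : 0 < fareyMap x := inv_pos.mp (by linarith)
    rw [Function.iterate_succ_apply, ih hTx_pos (by linarith), hTx]
    push_cast
    ring

lemma iterate_fareyMap_mem_Ioc {k : ℕ} {x : ℝ} (hx : 0 < x) (hk : (k : ℝ) + 1 ≤ x⁻¹)
    (hk' : x⁻¹ < (k : ℝ) + 2) : fareyMap^[k] x ∈ Set.Ioc (1 / 2 : ℝ) 1 := by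
  have hinv := inv_iterate_fareyMap k hx hk
  have hpos : 0 < fareyMap^[k] x := inv_pos.mp (by linarith)
  constructor
  · rw [one_div, inv_lt_comm₀ two_pos hpos]; linarith
  · rw [← inv_le_inv₀ zero_lt_one hpos, inv_one]; linarith

lemma iterate_fareyMap_le_half (k : ℕ) {x : ℝ} (hx : 0 ≤ x) (hxk : x ≤ ((k : ℝ) + 2)⁻¹) :
    fareyMap^[k] x ≤ 1 / 2 := by
  rcases hx.eq_or_lt with rfl | hx
  · rw [Function.iterate_fixed fareyMap_zero]; norm_num
  have hk : (k : ℝ) + 2 ≤ x⁻¹ := by rwa [le_inv_comm₀ hx (by positivity)] at hxk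
  have hinv := inv_iterate_fareyMap k hx (by linarith)
  rw [one_div, le_inv_comm₀ (inv_pos.mp (by linarith)) two_pos]
  linarith

lemma iUnion_preimage_iterate_fareyMap_inter_Icc (n : ℕ) :
    (⋃ k ∈ Finset.range (n + 1), fareyMap^[k] ⁻¹' Set.Ioc (1 / 2 : ℝ) 1) ∩ Set.Icc 0 1
      = Set.Ioc ((n : ℝ) + 2)⁻¹ 1 := by
  ext x
  simp only [Set.mem_inter_iff, Set.mem_iUnion, Set.mem_preimage, Set.mem_Icc, Set.mem_Ioc,
    Finset.mem_range, Nat.lt_succ_iff, exists_prop]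
  constructor
  · rintro ⟨⟨k, hkn, hmem⟩, hx0, hx1⟩
    refine ⟨lt_of_not_ge fun hxn => ?_, hx1⟩
    have hxk : x ≤ ((k : ℝ) + 2)⁻¹ :=
      hxn.trans (inv_anti₀ (by positivity) (by gcongr))
    linarith [iterate_fareyMap_le_half k hx0 hxk, hmem.1]
  · rintro ⟨hxn, hx1⟩
    have hx : 0 < x := (inv_pos.mpr (by positivity)).trans hxn
    have hx_inv_lt : x⁻¹ < (n : ℝ) + 2 := by rwa [inv_lt_comm₀ hx (by positivity)]
    have hx_inv_nonneg : 0 ≤ x⁻¹ := inv_nonneg.mpr hx.le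
    have hfloor : 1 ≤ ⌊x⁻¹⌋₊ :=
      Nat.le_floor (by rw [Nat.cast_one]; exact (one_le_inv₀ hx).mpr hx1)
    refine ⟨⟨⌊x⁻¹⌋₊ - 1, ?_, iterate_fareyMap_mem_Ioc hx ?_ ?_⟩, hx.le, hx1⟩
    · have : ⌊x⁻¹⌋₊ < n + 2 := (Nat.floor_lt hx_inv_nonneg).mpr (by exact_mod_cast hx_inv_lt)
      omega
    · rw [Nat.cast_sub hfloor, Nat.cast_one, sub_add_cancel]
      exact Nat.floor_le hx_inv_nonneg
    · rw [Nat.cast_sub hfloor, Nat.cast_one]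
      linarith [Nat.lt_floor_add_one x⁻¹]

lemma lintegral_Ioc_ofReal_one_div {a b : ℝ} (ha : 0 < a) (hab : a ≤ b) :
    ∫⁻ x in Set.Ioc a b, ENNReal.ofReal (1 / x) = ENNReal.ofReal (Real.log (b / a)) := by
  have hint : IntegrableOn (fun x : ℝ => 1 / x) (Set.Ioc a b) :=
    ((continuousOn_const.div continuousOn_id fun x hx => (ha.trans_le hx.1).ne').integrableOn_Icc
      ).mono_set Set.Ioc_subset_Icc_self
  have hnonneg : 0 ≤ᵐ[volume.restrict (Set.Ioc a b)] fun x : ℝ => 1 / x := by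
    filter_upwards [ae_restrict_mem measurableSet_Ioc] with x hx
    exact one_div_nonneg.mpr (ha.trans hx.1).le
  rw [← ofReal_integral_eq_lintegral_ofReal hint hnonneg, ← intervalIntegral.integral_of_le hab,
    integral_one_div fun h0 => ?_]
  rcases Set.mem_uIcc.mp h0 with h | h <;> linarith [h.1, h.2]

lemma fareyMeasure_iUnion_preimage_iterate (n : ℕ) :
    fareyMeasure (⋃ k ∈ Finset.range (n + 1), fareyMap^[k] ⁻¹' Set.Ioc (1 / 2 : ℝ) 1)
      = ENNReal.ofReal (Real.log ((n : ℝ) + 2)) := by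
  have hmeas : MeasurableSet
      (⋃ k ∈ Finset.range (n + 1), fareyMap^[k] ⁻¹' Set.Ioc (1 / 2 : ℝ) 1) :=
    .biUnion (Finset.range (n + 1)).countable_toSet fun k _ =>
      measurableSet_Ioc.preimage (measurable_fareyMap.iterate k)
  have hn : (0 : ℝ) < (n : ℝ) + 2 := by positivity
  rw [fareyMeasure, withDensity_apply _ hmeas, Measure.restrict_restrict hmeas,
    iUnion_preimage_iterate_fareyMap_inter_Icc,
    lintegral_Ioc_ofReal_one_div (inv_pos.mpr hn) (inv_le_one_of_one_le₀ (by linarith)),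
    one_div, inv_inv]

lemma tendsto_log_add_div_log (c : ℝ) :
    Tendsto (fun x : ℝ => Real.log (x + c) / Real.log x) atTop (nhds 1) := by
  have h : Tendsto (fun x : ℝ => 1 + (Real.log (x + c) - Real.log x) / Real.log x)
      atTop (nhds (1 + 0)) :=
    tendsto_const_nhds.add ((Real.tendsto_log_comp_add_sub_log c).div_atTop Real.tendsto_log_atTop)
  rw [add_zero] at h
  refine h.congr' ?_
  filter_upwards [eventually_gt_atTop 1] with x hx
  have hlog : Real.log x ≠ 0 := (Real.log_pos hx).ne'
  field_simp
  ring

/-- The wandering rate of `A₁ = (1/2,1]` for the Farey map: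
`Wₙ = μ(⋃_{k=0}^n T^{-k}A₁) = log (n+2)`, hence `Wₙ ∼ log n`. -/
theorem farey_wanderingRate :
    (∀ n : ℕ,
      fareyMeasure (⋃ k ∈ Finset.range (n + 1), fareyMap^[k] ⁻¹' Set.Ioc (1 / 2 : ℝ) 1)
        = ENNReal.ofReal (Real.log ((n : ℝ) + 2))) ∧
    Tendsto (fun n : ℕ =>
      (fareyMeasure (⋃ k ∈ Finset.range (n + 1),
        fareyMap^[k] ⁻¹' Set.Ioc (1 / 2 : ℝ) 1)).toReal / Real.log n) atTop (nhds 1) := by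
  refine ⟨fareyMeasure_iUnion_preimage_iterate, ?_⟩
  refine ((tendsto_log_add_div_log 2).comp tendsto_natCast_atTop_atTop).congr fun n => ?_
  rw [Function.comp_apply, fareyMeasure_iUnion_preimage_iterate,
    ENNReal.toReal_ofReal (Real.log_nonneg (by linarith [n.cast_nonneg (α := ℝ)]))]
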